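/- Under the urn model setup, for each i ∈ {1,…,d0} the series ∑_n 1/(S_n · N_{n,i}) converges almost surely. -/

import Mathlib

/-!
Fix a colour `i ≤ d0` and put `u n = E[1 / N n i]`. As `N (n+1) i = N n i + X A` with
`0 ≤ X A ≤ β`, the decrement `u n - u (n+1)` is at least `E[A · X / (N n i (N n i + β))]`.
Independence of `A (n+1)` from `G n ⊔ σ(X (n+1))` factors out `E[A (n+1) i]`, which tends to
`m > λ0 ≥ 0`, and conditioning on `G n` replaces `X (n+1) i` by `Z n i = N n i / S n`, leaving
`E[1 / (S n (N n i + β))] ≥ a i / (a i + β) · E[1 / (S n N n i)]`. Hence `E[1 / (S n N n i)]` is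
eventually dominated by a multiple of the telescoping `u n - u (n+1)`, so it is summable, and a
series of nonnegative functions with summable expectations converges almost surely.
-/

open MeasureTheory ProbabilityTheory Filter

section General

variable {Ω : Type*} {F mΩ : MeasurableSpace Ω} {μ : Measure Ω}

theorem ae_summable_of_summable_integral {f : ℕ → Ω → ℝ} (hf : ∀ n, Integrable (f n) μ)
    (hf_nonneg : ∀ n, 0 ≤ᵐ[μ] f n) (hsum : Summable fun n => ∫ ω, f n ω ∂μ) :
    ∀ᵐ ω ∂μ, Summable fun n => f n ω := by
  have hnorm n : ∫ ω, ‖f n ω‖ ∂μ = ∫ ω, f n ω ∂μ :=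
    integral_congr_ae ((hf_nonneg n).mono fun ω hω => Real.norm_of_nonneg hω)
  have hfin : ∑' n, eLpNorm (f n) 1 μ ≠ ⊤ := by
    simp_rw [eLpNorm_one_eq_lintegral_enorm,
      ← fun n => ofReal_integral_norm_eq_lintegral_enorm (hf n), hnorm, ← ENNReal.ofReal_tsum_of_nonneg (fun n => integral_nonneg_of_ae (hf_nonneg n)) hsum]
    exact ENNReal.ofReal_ne_top
  filter_upwards [summable_norm_of_tsum_eLpNorm_ne_top le_rfl
    (fun n => (hf n).aestronglyMeasurable) hfin] with ω hω
  exact hω.of_norm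

theorem integrable_of_nonneg_of_le [IsFiniteMeasure μ] {f : Ω → ℝ} {C : ℝ} (hf : Measurable f)
    (h0 : ∀ ω, 0 ≤ f ω) (hC : ∀ ω, f ω ≤ C) : Integrable f μ :=
  Integrable.of_bound hf.aestronglyMeasurable C
    (ae_of_all _ fun ω => by rw [Real.norm_of_nonneg (h0 ω)]; exact hC ω)

theorem integrable_one_div_mul [IsFiniteMeasure μ] {f g : Ω → ℝ} {a : ℝ} (ha : 0 < a)
    (hf : Measurable f) (hg : Measurable g) (haf : ∀ ω, a ≤ f ω) (hag : ∀ ω, a ≤ g ω) :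
    Integrable (fun ω => 1 / (f ω * g ω)) μ :=
  integrable_of_nonneg_of_le (measurable_const.div (hf.mul hg))
    (fun ω => (one_div_pos.mpr (mul_pos (ha.trans_le (haf ω)) (ha.trans_le (hag ω)))).le)
    fun ω => one_div_le_one_div_of_le (mul_pos ha ha)
      (mul_le_mul (haf ω) (hag ω) ha.le ((ha.trans_le (haf ω)).le))

theorem integral_mul_eq_of_condExp_ae_eq [IsFiniteMeasure μ] (hF : F ≤ mΩ) {g X Z : Ω → ℝ}
    (hg : StronglyMeasurable[F] g) (hgX : Integrable (g * X) μ) (hX : Integrable X μ)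
    (hZ : μ[X|F] =ᵐ[μ] Z) : ∫ ω, g ω * X ω ∂μ = ∫ ω, g ω * Z ω ∂μ := by
  change ∫ ω, (g * X) ω ∂μ = _
  rw [← integral_condExp hF]
  refine integral_congr_ae ?_
  filter_upwards [condExp_mul_of_stronglyMeasurable_left hg hgX hX, hZ] with ω h1 h2
  rw [h1, Pi.mul_apply, h2]

theorem limsup_integral_nonneg [IsProbabilityMeasure μ] {f : ℕ → Ω → ℝ} {C : ℝ}
    (hf : ∀ᶠ n in atTop, ∀ ω, 0 ≤ f n ω ∧ f n ω ≤ C) :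
    0 ≤ limsup (fun n => ∫ ω, f n ω ∂μ) atTop := by
  refine le_limsup_of_frequently_le
    (hf.mono fun n hn => integral_nonneg fun ω => (hn ω).1).frequently ⟨C, eventually_map.mpr (hf.mono fun n hn => ?_)⟩
  calc ∫ ω, f n ω ∂μ ≤ ∫ _, C ∂μ :=
        integral_mono_of_nonneg (ae_of_all _ fun ω => (hn ω).1) (integrable_const C)
          (ae_of_all _ fun ω => (hn ω).2)
    _ = C := by simp

end General

theorem summable_of_mul_le_sub_succ {u v : ℕ → ℝ} {c : ℝ} (hc : 0 < c) (hu : ∀ n, 0 ≤ u n)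
    (hv : ∀ n, 0 ≤ v n) (h : ∀ᶠ n in atTop, c * v n ≤ u n - u (n + 1)) : Summable v := by
  obtain ⟨n₀, hn₀⟩ := eventually_atTop.mp h
  rw [← summable_nat_add_iff n₀]
  refine summable_of_sum_range_le (c := u n₀ / c) (fun k => hv _) fun M => ?_
  have htel : ∑ k ∈ Finset.range M, (u (n₀ + k) - u (n₀ + (k + 1))) = u n₀ - u (n₀ + M) := by
    simpa using Finset.sum_range_sub' (fun k => u (n₀ + k)) M
  rw [le_div_iff₀ hc, Finset.sum_mul]
  calc ∑ k ∈ Finset.range M, v (k + n₀) * c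
      ≤ ∑ k ∈ Finset.range M, (u (n₀ + k) - u (n₀ + (k + 1))) := by
        refine Finset.sum_le_sum fun k _ => ?_
        rw [mul_comm, add_comm]
        exact hn₀ _ (Nat.le_add_right _ _)
    _ ≤ u n₀ := by linarith [hu (n₀ + M)]

theorem div_mul_add_le_one_div_sub_one_div {N t β : ℝ} (hN : 0 < N) (ht0 : 0 ≤ t) (htβ : t ≤ β) :
    t / (N * (N + β)) ≤ 1 / N - 1 / (N + t) := by
  have hNt : 0 < N + t := by linarith
  rw [div_sub_div _ _ hN.ne' hNt.ne', one_mul, mul_one, add_sub_cancel_left]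
  exact div_le_div_of_nonneg_left ht0 (mul_pos hN hNt) (by gcongr)

theorem div_add_mul_one_div_le {a β N S : ℝ} (ha : 0 < a) (hβ : 0 ≤ β) (haN : a ≤ N)
    (hS : 0 < S) : a / (a + β) * (1 / (S * N)) ≤ 1 / (S * (N + β)) := by
  have hN : 0 < N := ha.trans_le haN
  rw [div_mul_div_comm, mul_one, div_le_div_iff₀ (by positivity) (by positivity)]
  nlinarith [mul_nonneg (mul_nonneg hβ hS.le) (sub_nonneg.mpr haN)]

section OneStep

variable {Ω : Type*} {F mΩ : MeasurableSpace Ω} {μ : Measure Ω} [IsFiniteMeasure μ]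
  {N S X A : Ω → ℝ} {a β : ℝ}

theorem integrable_div_mul_add (ha : 0 < a) (hβ : 0 ≤ β) (hN : Measurable N)
    (hX : Measurable X) (haN : ∀ ω, a ≤ N ω) (hX0 : ∀ ω, 0 ≤ X ω) (hX1 : ∀ ω, X ω ≤ 1) :
    Integrable (fun ω => X ω / (N ω * (N ω + β))) μ := by
  have hpos ω : 0 < N ω * (N ω + β) := by nlinarith [haN ω]
  refine integrable_of_nonneg_of_le (C := 1 / (a * a)) (hX.div (hN.mul (hN.add_const β)))
    (fun ω => div_nonneg (hX0 ω) (hpos ω).le) fun ω => ?_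
  exact div_le_div₀ zero_le_one (hX1 ω) (mul_pos ha ha)
    (mul_le_mul (haN ω) (by linarith [haN ω]) ha.le (by linarith [haN ω]))

theorem integral_div_mul_add_eq_of_condExp (hF : F ≤ mΩ) (ha : 0 < a) (hβ : 0 ≤ β)
    (hNF : Measurable[F] N) (hX : Measurable X) (haN : ∀ ω, a ≤ N ω) (hX0 : ∀ ω, 0 ≤ X ω)
    (hX1 : ∀ ω, X ω ≤ 1) (hcond : μ[X|F] =ᵐ[μ] fun ω => N ω / S ω) :
    ∫ ω, X ω / (N ω * (N ω + β)) ∂μ = ∫ ω, 1 / (S ω * (N ω + β)) ∂μ := by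
  have hNpos ω : 0 < N ω := ha.trans_le (haN ω)
  have hgF : Measurable[F] fun ω => (N ω * (N ω + β))⁻¹ := (hNF.mul (hNF.add_const β)).inv
  have hgX : Integrable ((fun ω => (N ω * (N ω + β))⁻¹) * X) μ := by
    convert integrable_div_mul_add (μ := μ) ha hβ (hNF.mono hF le_rfl) hX haN hX0 hX1 using 2
    simp only [Pi.mul_apply, div_eq_inv_mul]
  calc ∫ ω, X ω / (N ω * (N ω + β)) ∂μ = ∫ ω, (N ω * (N ω + β))⁻¹ * X ω ∂μ := by
        simp_rw [div_eq_inv_mul]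
    _ = ∫ ω, (N ω * (N ω + β))⁻¹ * (N ω / S ω) ∂μ :=
        integral_mul_eq_of_condExp_ae_eq hF hgF.stronglyMeasurable hgX
          (integrable_of_nonneg_of_le hX hX0 hX1) hcond
    _ = ∫ ω, 1 / (S ω * (N ω + β)) ∂μ := by
        refine integral_congr_ae (ae_of_all _ fun ω => ?_)
        have := hNpos ω
        field_simp

theorem integral_mul_integral_div_le_integral_one_div_sub (hF : F ≤ mΩ) (ha : 0 < a) (hβ : 0 ≤ β)
    (hNF : Measurable[F] N) (hX : Measurable X) (hA : Measurable A) (haN : ∀ ω, a ≤ N ω)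
    (hX0 : ∀ ω, 0 ≤ X ω) (hX1 : ∀ ω, X ω ≤ 1) (hA0 : ∀ ω, 0 ≤ A ω) (hAβ : ∀ ω, A ω ≤ β)
    (hindep : Indep (MeasurableSpace.comap A inferInstance)
      (F ⊔ MeasurableSpace.comap X inferInstance) μ) :
    (∫ ω, A ω ∂μ) * ∫ ω, X ω / (N ω * (N ω + β)) ∂μ ≤
      ∫ ω, 1 / N ω ∂μ - ∫ ω, 1 / (N ω + X ω * A ω) ∂μ := by
  have hN : Measurable N := hNF.mono hF le_rfl
  have hNpos ω : 0 < N ω := ha.trans_le (haN ω)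
  have hXA0 ω : 0 ≤ X ω * A ω := mul_nonneg (hX0 ω) (hA0 ω)
  have hXAβ ω : X ω * A ω ≤ β := by nlinarith [hX0 ω, hX1 ω, hA0 ω, hAβ ω]
  have hA_int : Integrable A μ := integrable_of_nonneg_of_le hA hA0 hAβ
  have hXN_int : Integrable (fun ω => X ω / (N ω * (N ω + β))) μ :=
    integrable_div_mul_add ha hβ hN hX haN hX0 hX1
  have hinvN_int : Integrable (fun ω => 1 / N ω) μ :=
    integrable_of_nonneg_of_le (measurable_const.div hN) (fun ω => (one_div_pos.mpr (hNpos ω)).le)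
      fun ω => one_div_le_one_div_of_le ha (haN ω)
  have hinvN'_int : Integrable (fun ω => 1 / (N ω + X ω * A ω)) μ :=
    integrable_of_nonneg_of_le (measurable_const.div (hN.add (hX.mul hA)))
      (fun ω => (one_div_pos.mpr (by linarith [hNpos ω, hXA0 ω])).le)
      fun ω => one_div_le_one_div_of_le ha (by linarith [haN ω, hXA0 ω])
  have hIndep : IndepFun A (fun ω => X ω / (N ω * (N ω + β))) μ := by
    rw [IndepFun_iff_Indep]
    refine indep_of_indep_of_le_right hindep (Measurable.comap_le ?_)
    exact ((comap_measurable X).mono le_sup_right le_rfl).div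
      ((hNF.mul (hNF.add_const β)).mono le_sup_left le_rfl)
  rw [← hIndep.integral_fun_mul_eq_mul_integral hA_int.aestronglyMeasurable
    hXN_int.aestronglyMeasurable, ← integral_sub hinvN_int hinvN'_int]
  refine integral_mono (hIndep.integrable_mul hA_int hXN_int) (hinvN_int.sub hinvN'_int)
    fun ω => ?_
  calc A ω * (X ω / (N ω * (N ω + β))) = X ω * A ω / (N ω * (N ω + β)) := by ring
    _ ≤ _ := div_mul_add_le_one_div_sub_one_div (hNpos ω) (hXA0 ω) (hXAβ ω)

theorem integral_mul_integral_one_div_mul_le_integral_one_div_sub (hF : F ≤ mΩ) (ha : 0 < a)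
    (hβ : 0 ≤ β) (hNF : Measurable[F] N) (hS : Measurable S) (hX : Measurable X) (hA : Measurable A)
    (haN : ∀ ω, a ≤ N ω) (hNS : ∀ ω, N ω ≤ S ω) (hX0 : ∀ ω, 0 ≤ X ω) (hX1 : ∀ ω, X ω ≤ 1)
    (hA0 : ∀ ω, 0 ≤ A ω) (hAβ : ∀ ω, A ω ≤ β)
    (hindep : Indep (MeasurableSpace.comap A inferInstance)
      (F ⊔ MeasurableSpace.comap X inferInstance) μ)
    (hcond : μ[X|F] =ᵐ[μ] fun ω => N ω / S ω) :
    (∫ ω, A ω ∂μ) * (a / (a + β)) * ∫ ω, 1 / (S ω * N ω) ∂μ ≤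
      ∫ ω, 1 / N ω ∂μ - ∫ ω, 1 / (N ω + X ω * A ω) ∂μ := by
  have hN : Measurable N := hNF.mono hF le_rfl
  have haS ω : a ≤ S ω := (haN ω).trans (hNS ω)
  calc (∫ ω, A ω ∂μ) * (a / (a + β)) * ∫ ω, 1 / (S ω * N ω) ∂μ
      = (∫ ω, A ω ∂μ) * ∫ ω, a / (a + β) * (1 / (S ω * N ω)) ∂μ := by
        rw [integral_const_mul, mul_assoc]
    _ ≤ (∫ ω, A ω ∂μ) * ∫ ω, 1 / (S ω * (N ω + β)) ∂μ := by
        refine mul_le_mul_of_nonneg_left (integral_mono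
          ((integrable_one_div_mul ha hS hN haS haN).const_mul _)
          (integrable_one_div_mul ha hS (hN.add_const β) haS fun ω => by linarith [haN ω])
          fun ω => div_add_mul_one_div_le ha hβ (haN ω) (ha.trans_le (haS ω)))
          (integral_nonneg hA0)
    _ = (∫ ω, A ω ∂μ) * ∫ ω, X ω / (N ω * (N ω + β)) ∂μ := by
        rw [integral_div_mul_add_eq_of_condExp hF ha hβ hNF hX haN hX0 hX1 hcond]
    _ ≤ _ := integral_mul_integral_div_le_integral_one_div_sub hF ha hβ hNF hX hA haN hX0 hX1
        hA0 hAβ hindep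

end OneStep

section Urn

variable {Ω : Type*} {mΩ : MeasurableSpace Ω} {d : ℕ} {X A N : ℕ → ℕ → Ω → ℝ} {S : ℕ → Ω → ℝ}
  {a : ℕ → ℝ} {β : ℝ} {G : ℕ → MeasurableSpace Ω}

theorem comap_sup_comap_le_of_eq_iSup
    (hG : ∀ n, 1 ≤ n → G n = ⨆ k ∈ Finset.Icc 1 n, ⨆ j ∈ Finset.Icc 1 d,
        (MeasurableSpace.comap (X k j) Real.measurableSpace ⊔
         MeasurableSpace.comap (A k j) Real.measurableSpace))
    {n k j : ℕ} (hk : k ∈ Finset.Icc 1 n) (hj : j ∈ Finset.Icc 1 d) :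
    MeasurableSpace.comap (X k j) Real.measurableSpace ⊔
      MeasurableSpace.comap (A k j) Real.measurableSpace ≤ G n := by
  rw [hG n ((Finset.mem_Icc.mp hk).1.trans (Finset.mem_Icc.mp hk).2)]
  exact le_iSup₂_of_le k hk (le_iSup₂_of_le j hj le_rfl)

theorem le_of_eq_iSup (hXmeas : ∀ n j, Measurable (X n j)) (hAmeas : ∀ n j, Measurable (A n j))
    (hG : ∀ n, 1 ≤ n → G n = ⨆ k ∈ Finset.Icc 1 n, ⨆ j ∈ Finset.Icc 1 d,
        (MeasurableSpace.comap (X k j) Real.measurableSpace ⊔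
         MeasurableSpace.comap (A k j) Real.measurableSpace))
    {n : ℕ} (hn : 1 ≤ n) : G n ≤ mΩ := by
  rw [hG n hn]
  exact iSup₂_le fun k _ => iSup₂_le fun j _ => sup_le (hXmeas k j).comap_le (hAmeas k j).comap_le

theorem measurable_urn_count {m : MeasurableSpace Ω}
    (hN : ∀ n j ω, N n j ω = a j + ∑ k ∈ Finset.Icc 1 n, X k j ω * A k j ω) {n j : ℕ}
    (hX : ∀ k ∈ Finset.Icc 1 n, Measurable[m] (X k j))
    (hA : ∀ k ∈ Finset.Icc 1 n, Measurable[m] (A k j)) : Measurable[m] (N n j) := by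
  rw [show N n j = _ from funext (hN n j)]
  exact measurable_const.add (Finset.measurable_sum _ fun k hk => (hX k hk).mul (hA k hk))

theorem measurable_urn_total (hXmeas : ∀ n j, Measurable (X n j))
    (hAmeas : ∀ n j, Measurable (A n j))
    (hN : ∀ n j ω, N n j ω = a j + ∑ k ∈ Finset.Icc 1 n, X k j ω * A k j ω)
    (hS : ∀ n ω, S n ω = ∑ i ∈ Finset.Icc 1 d, N n i ω) (n : ℕ) : Measurable (S n) := by
  rw [show S n = _ from funext (hS n)]
  exact Finset.measurable_sum _ fun j _ =>
    measurable_urn_count hN (fun k _ => hXmeas k j) (fun k _ => hAmeas k j)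

theorem le_urn_count
    (hX01 : ∀ n, 1 ≤ n → ∀ j ∈ Finset.Icc 1 d, ∀ ω, X n j ω = 0 ∨ X n j ω = 1)
    (hAbd : ∀ n, 1 ≤ n → ∀ j ∈ Finset.Icc 1 d, ∀ ω, 0 ≤ A n j ω ∧ A n j ω ≤ β)
    (hN : ∀ n j ω, N n j ω = a j + ∑ k ∈ Finset.Icc 1 n, X k j ω * A k j ω)
    {j : ℕ} (hj : j ∈ Finset.Icc 1 d) (n : ℕ) (ω : Ω) : a j ≤ N n j ω := by
  rw [hN, le_add_iff_nonneg_right]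
  refine Finset.sum_nonneg fun k hk => mul_nonneg ?_ (hAbd k (Finset.mem_Icc.mp hk).1 j hj ω).1
  rcases hX01 k (Finset.mem_Icc.mp hk).1 j hj ω with h | h <;> simp [h]

theorem urn_count_le_total (ha : ∀ j ∈ Finset.Icc 1 d, 0 < a j)
    (hX01 : ∀ n, 1 ≤ n → ∀ j ∈ Finset.Icc 1 d, ∀ ω, X n j ω = 0 ∨ X n j ω = 1)
    (hAbd : ∀ n, 1 ≤ n → ∀ j ∈ Finset.Icc 1 d, ∀ ω, 0 ≤ A n j ω ∧ A n j ω ≤ β)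
    (hN : ∀ n j ω, N n j ω = a j + ∑ k ∈ Finset.Icc 1 n, X k j ω * A k j ω)
    (hS : ∀ n ω, S n ω = ∑ i ∈ Finset.Icc 1 d, N n i ω)
    {i : ℕ} (hi : i ∈ Finset.Icc 1 d) (n : ℕ) (ω : Ω) : N n i ω ≤ S n ω := by
  rw [hS]
  exact Finset.single_le_sum
    (fun j hj => ((ha j hj).trans_le (le_urn_count hX01 hAbd hN hj n ω)).le) hi

theorem urn_count_succ (hN : ∀ n j ω, N n j ω = a j + ∑ k ∈ Finset.Icc 1 n, X k j ω * A k j ω)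
    (n j : ℕ) (ω : Ω) : N (n + 1) j ω = N n j ω + X (n + 1) j ω * A (n + 1) j ω := by
  rw [hN, hN, Finset.sum_Icc_succ_top (Nat.le_add_left 1 n), add_assoc]

theorem urn_integral_le_integral_one_div_sub_succ {μ : Measure Ω} [IsFiniteMeasure μ]
    (hXmeas : ∀ n j, Measurable (X n j)) (hAmeas : ∀ n j, Measurable (A n j))
    (hX01 : ∀ n, 1 ≤ n → ∀ j ∈ Finset.Icc 1 d, ∀ ω, X n j ω = 0 ∨ X n j ω = 1)
    (hAbd : ∀ n, 1 ≤ n → ∀ j ∈ Finset.Icc 1 d, ∀ ω, 0 ≤ A n j ω ∧ A n j ω ≤ β) (hβ : 0 ≤ β)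
    (ha : ∀ j ∈ Finset.Icc 1 d, 0 < a j)
    (hG : ∀ n, 1 ≤ n → G n = ⨆ k ∈ Finset.Icc 1 n, ⨆ j ∈ Finset.Icc 1 d,
        (MeasurableSpace.comap (X k j) Real.measurableSpace ⊔
         MeasurableSpace.comap (A k j) Real.measurableSpace))
    (hindep : ∀ n, 1 ≤ n → ProbabilityTheory.Indep
        (⨆ j ∈ Finset.Icc 1 d, MeasurableSpace.comap (A n j) Real.measurableSpace)
        (G (n - 1) ⊔ ⨆ j ∈ Finset.Icc 1 d, MeasurableSpace.comap (X n j) Real.measurableSpace) μ)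
    (hN : ∀ n j ω, N n j ω = a j + ∑ k ∈ Finset.Icc 1 n, X k j ω * A k j ω)
    (hS : ∀ n ω, S n ω = ∑ i ∈ Finset.Icc 1 d, N n i ω)
    {i : ℕ} (hi : i ∈ Finset.Icc 1 d)
    (hcond : ∀ n, μ[X (n + 1) i | G n] =ᵐ[μ] fun ω => N n i ω / S n ω) {n : ℕ} (hn : 1 ≤ n) :
    (∫ ω, A (n + 1) i ω ∂μ) * (a i / (a i + β)) * ∫ ω, 1 / (S n ω * N n i ω) ∂μ ≤
      ∫ ω, 1 / N n i ω ∂μ - ∫ ω, 1 / N (n + 1) i ω ∂μ := by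
  have hX01' := hX01 (n + 1) (Nat.le_add_left 1 n) i hi
  have hAbd' := hAbd (n + 1) (Nat.le_add_left 1 n) i hi
  have hXG : ∀ k ∈ Finset.Icc 1 n, Measurable[G n] (X k i) := fun k hk =>
    Measurable.of_comap_le (le_sup_left.trans (comap_sup_comap_le_of_eq_iSup hG hk hi))
  have hAG : ∀ k ∈ Finset.Icc 1 n, Measurable[G n] (A k i) := fun k hk =>
    Measurable.of_comap_le (le_sup_right.trans (comap_sup_comap_le_of_eq_iSup hG hk hi))
  have hindep' : Indep (MeasurableSpace.comap (A (n + 1) i) Real.measurableSpace)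
      (G n ⊔ MeasurableSpace.comap (X (n + 1) i) Real.measurableSpace) μ := by
    have h := hindep (n + 1) (Nat.le_add_left 1 n)
    rw [Nat.add_sub_cancel] at h
    exact indep_of_indep_of_le_right (indep_of_indep_of_le_left h (le_iSup₂_of_le i hi le_rfl))
      (sup_le_sup_left (le_iSup₂_of_le (f := fun j _ =>
        MeasurableSpace.comap (X (n + 1) j) Real.measurableSpace) i hi le_rfl) _)
  simp_rw [urn_count_succ hN n i]
  exact integral_mul_integral_one_div_mul_le_integral_one_div_sub
    (le_of_eq_iSup hXmeas hAmeas hG hn) (ha i hi) hβ (measurable_urn_count hN hXG hAG)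
    (measurable_urn_total hXmeas hAmeas hN hS n) (hXmeas _ _) (hAmeas _ _)
    (le_urn_count hX01 hAbd hN hi n) (urn_count_le_total ha hX01 hAbd hN hS hi n)
    (fun ω => by rcases hX01' ω with h | h <;> simp [h])
    (fun ω => by rcases hX01' ω with h | h <;> simp [h])
    (fun ω => (hAbd' ω).1) (fun ω => (hAbd' ω).2) hindep' (hcond n)

theorem ae_summable_one_div_urn_total_mul_count {μ : Measure Ω} [IsFiniteMeasure μ]
    (hXmeas : ∀ n j, Measurable (X n j)) (hAmeas : ∀ n j, Measurable (A n j))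
    (hX01 : ∀ n, 1 ≤ n → ∀ j ∈ Finset.Icc 1 d, ∀ ω, X n j ω = 0 ∨ X n j ω = 1)
    (hAbd : ∀ n, 1 ≤ n → ∀ j ∈ Finset.Icc 1 d, ∀ ω, 0 ≤ A n j ω ∧ A n j ω ≤ β) (hβ : 0 ≤ β)
    (ha : ∀ j ∈ Finset.Icc 1 d, 0 < a j)
    (hG : ∀ n, 1 ≤ n → G n = ⨆ k ∈ Finset.Icc 1 n, ⨆ j ∈ Finset.Icc 1 d,
        (MeasurableSpace.comap (X k j) Real.measurableSpace ⊔
         MeasurableSpace.comap (A k j) Real.measurableSpace))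
    (hindep : ∀ n, 1 ≤ n → ProbabilityTheory.Indep
        (⨆ j ∈ Finset.Icc 1 d, MeasurableSpace.comap (A n j) Real.measurableSpace)
        (G (n - 1) ⊔ ⨆ j ∈ Finset.Icc 1 d, MeasurableSpace.comap (X n j) Real.measurableSpace) μ)
    (hN : ∀ n j ω, N n j ω = a j + ∑ k ∈ Finset.Icc 1 n, X k j ω * A k j ω)
    (hS : ∀ n ω, S n ω = ∑ i ∈ Finset.Icc 1 d, N n i ω)
    {i : ℕ} (hi : i ∈ Finset.Icc 1 d)
    (hcond : ∀ n, μ[X (n + 1) i | G n] =ᵐ[μ] fun ω => N n i ω / S n ω) {c : ℝ} (hc : 0 < c)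
    (hmean : ∀ᶠ n in atTop, c ≤ ∫ ω, A (n + 1) i ω ∂μ) :
    ∀ᵐ ω ∂μ, Summable fun n => 1 / (S n ω * N n i ω) := by
  have hai := ha i hi
  have haN := le_urn_count hX01 hAbd hN hi
  have hNS := urn_count_le_total ha hX01 hAbd hN hS hi
  have hpos n ω : 0 < S n ω * N n i ω :=
    mul_pos (hai.trans_le ((haN n ω).trans (hNS n ω))) (hai.trans_le (haN n ω))
  refine ae_summable_of_summable_integral (fun n => integrable_one_div_mul hai
      (measurable_urn_total hXmeas hAmeas hN hS n)
      (measurable_urn_count hN (fun k _ => hXmeas k i) (fun k _ => hAmeas k i))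
      (fun ω => (haN n ω).trans (hNS n ω)) (haN n))
    (fun n => ae_of_all _ fun ω => (one_div_pos.mpr (hpos n ω)).le) ?_
  have hratio : 0 < a i / (a i + β) := div_pos hai (by linarith)
  refine summable_of_mul_le_sub_succ (u := fun n => ∫ ω, 1 / N n i ω ∂μ)
    (c := c * (a i / (a i + β))) (mul_pos hc hratio)
    (fun n => integral_nonneg fun ω => (one_div_pos.mpr (hai.trans_le (haN n ω))).le)
    (fun n => integral_nonneg fun ω => (one_div_pos.mpr (hpos n ω)).le) ?_
  filter_upwards [hmean, eventually_ge_atTop 1] with n hn hn1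
  calc c * (a i / (a i + β)) * ∫ ω, 1 / (S n ω * N n i ω) ∂μ
      ≤ (∫ ω, A (n + 1) i ω ∂μ) * (a i / (a i + β)) * ∫ ω, 1 / (S n ω * N n i ω) ∂μ := by
        gcongr
        exact integral_nonneg fun ω => (one_div_pos.mpr (hpos n ω)).le
    _ ≤ _ := urn_integral_le_integral_one_div_sub_succ hXmeas hAmeas hX01 hAbd hβ ha hG hindep
        hN hS hi hcond hn1

theorem sup'_limsup_integral_nonneg {μ : Measure Ω} [IsProbabilityMeasure μ] {d0 : ℕ} (h : d0 < d)
    (hAbd : ∀ n, 1 ≤ n → ∀ j ∈ Finset.Icc 1 d, ∀ ω, 0 ≤ A n j ω ∧ A n j ω ≤ β) :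
    0 ≤ (Finset.Ioc d0 d).sup' (Finset.nonempty_Ioc.mpr h)
      (fun j => limsup (fun n : ℕ => ∫ ω, A n j ω ∂μ) atTop) := by
  have hd : d ∈ Finset.Icc 1 d := Finset.mem_Icc.mpr ⟨by omega, le_rfl⟩
  exact (limsup_integral_nonneg ((eventually_ge_atTop 1).mono fun n hn => hAbd n hn d hd)).trans
    (Finset.le_sup' (fun j => limsup (fun n : ℕ => ∫ ω, A n j ω ∂μ) atTop)
      (Finset.mem_Ioc.mpr ⟨h, le_rfl⟩))

end Urn

theorem stmt15_general
    {Ω : Type*} [MeasurableSpace Ω] {μ : Measure Ω} [IsProbabilityMeasure μ]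
    (d d0 : ℕ) (hd0d : d0 ≤ d)
    (X A : ℕ → ℕ → Ω → ℝ)
    (hXmeas : ∀ n j, Measurable (X n j)) (hAmeas : ∀ n j, Measurable (A n j))
    (β : ℝ)
    (hX01 : ∀ n, 1 ≤ n → ∀ j ∈ Finset.Icc 1 d, ∀ ω, X n j ω = 0 ∨ X n j ω = 1)
    (hAbd : ∀ n, 1 ≤ n → ∀ j ∈ Finset.Icc 1 d, ∀ ω, 0 ≤ A n j ω ∧ A n j ω ≤ β)
    (a : ℕ → ℝ) (ha : ∀ j ∈ Finset.Icc 1 d, 0 < a j)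
    (G : ℕ → MeasurableSpace Ω)
    (hG : ∀ n, 1 ≤ n → G n = ⨆ k ∈ Finset.Icc 1 n, ⨆ j ∈ Finset.Icc 1 d,
        (MeasurableSpace.comap (X k j) Real.measurableSpace ⊔
         MeasurableSpace.comap (A k j) Real.measurableSpace))
    (hindep : ∀ n, 1 ≤ n → ProbabilityTheory.Indep
        (⨆ j ∈ Finset.Icc 1 d, MeasurableSpace.comap (A n j) Real.measurableSpace)
        (G (n - 1) ⊔ ⨆ j ∈ Finset.Icc 1 d, MeasurableSpace.comap (X n j) Real.measurableSpace) μ)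
    (N : ℕ → ℕ → Ω → ℝ)
    (hN : ∀ n j ω, N n j ω = a j + ∑ k ∈ Finset.Icc 1 n, X k j ω * A k j ω)
    (S : ℕ → Ω → ℝ)
    (hS : ∀ n ω, S n ω = ∑ i ∈ Finset.Icc 1 d, N n i ω)
    (Z : ℕ → ℕ → Ω → ℝ)
    (hZ : ∀ n j ω, Z n j ω = N n j ω / S n ω)
    (hZcond : ∀ n, ∀ j ∈ Finset.Icc 1 d, Z n j =ᵐ[μ] μ[X (n + 1) j | G n])
    (lam0 m : ℝ)
    (hlam0_eq : d0 = d → lam0 = 0)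
    (hlam0_lt : ∀ h : d0 < d, lam0 = (Finset.Ioc d0 d).sup'
        (Finset.nonempty_Ioc.mpr h)
        (fun j => Filter.limsup (fun n : ℕ => ∫ ω, A n j ω ∂μ) Filter.atTop))
    (hEA : ∀ n, 1 ≤ n → ∀ j ∈ Finset.Icc 1 d0, ∫ ω, A n j ω ∂μ = ∫ ω, A n 1 ω ∂μ)
    (hm : Filter.Tendsto (fun n : ℕ => ∫ ω, A n 1 ω ∂μ) Filter.atTop (nhds m))
    (hmgt : lam0 < m) :
    ∀ i ∈ Finset.Icc 1 d0,
      ∀ᵐ ω ∂μ, Summable (fun n : ℕ => 1 / (S n ω * N n i ω)) := by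
  intro i hi
  have hi' : i ∈ Finset.Icc 1 d := Finset.Icc_subset_Icc_right hd0d hi
  have hβ : 0 ≤ β := by
    obtain ⟨ω⟩ := nonempty_of_isProbabilityMeasure μ
    exact (hAbd 1 le_rfl i hi' ω).1.trans (hAbd 1 le_rfl i hi' ω).2
  have hm_pos : 0 < m := by
    refine lt_of_le_of_lt ?_ hmgt
    rcases hd0d.lt_or_eq with h | h
    · exact (hlam0_lt h).ge.trans' (sup'_limsup_integral_nonneg h hAbd)
    · exact (hlam0_eq h).ge
  have hmean : ∀ᶠ n in atTop, m / 2 ≤ ∫ ω, A (n + 1) i ω ∂μ := by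
    filter_upwards [(hm.comp (tendsto_add_atTop_nat 1)).eventually
      (eventually_ge_nhds (half_lt_self hm_pos))] with n hn
    rwa [hEA (n + 1) (Nat.le_add_left 1 n) i hi]
  exact ae_summable_one_div_urn_total_mul_count hXmeas hAmeas hX01 hAbd hβ ha hG hindep hN hS hi'
    (fun n => (hZcond n i hi').symm.trans (Eventually.of_forall (hZ n i)))
    (half_pos hm_pos) hmean

theorem stmt15
    {Ω : Type*} [MeasurableSpace Ω] {μ : Measure Ω} [IsProbabilityMeasure μ]
    (d d0 : ℕ) (hd : 2 ≤ d) (hd01 : 1 ≤ d0) (hd0d : d0 ≤ d)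
    (X A : ℕ → ℕ → Ω → ℝ)
    (hXmeas : ∀ n j, Measurable (X n j)) (hAmeas : ∀ n j, Measurable (A n j))
    (β : ℝ)
    (hX01 : ∀ n, 1 ≤ n → ∀ j ∈ Finset.Icc 1 d, ∀ ω, X n j ω = 0 ∨ X n j ω = 1)
    (hXsum : ∀ n, 1 ≤ n → ∀ ω, ∑ j ∈ Finset.Icc 1 d, X n j ω = 1)
    (hAbd : ∀ n, 1 ≤ n → ∀ j ∈ Finset.Icc 1 d, ∀ ω, 0 ≤ A n j ω ∧ A n j ω ≤ β)
    (a : ℕ → ℝ) (ha : ∀ j ∈ Finset.Icc 1 d, 0 < a j)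
    (G : ℕ → MeasurableSpace Ω)
    (hG0 : G 0 = ⊥)
    (hG : ∀ n, 1 ≤ n → G n = ⨆ k ∈ Finset.Icc 1 n, ⨆ j ∈ Finset.Icc 1 d,
        (MeasurableSpace.comap (X k j) Real.measurableSpace ⊔
         MeasurableSpace.comap (A k j) Real.measurableSpace))
    (hindep : ∀ n, 1 ≤ n → ProbabilityTheory.Indep
        (⨆ j ∈ Finset.Icc 1 d, MeasurableSpace.comap (A n j) Real.measurableSpace)
        (G (n - 1) ⊔ ⨆ j ∈ Finset.Icc 1 d, MeasurableSpace.comap (X n j) Real.measurableSpace) μ)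
    (N : ℕ → ℕ → Ω → ℝ)
    (hN : ∀ n j ω, N n j ω = a j + ∑ k ∈ Finset.Icc 1 n, X k j ω * A k j ω)
    (S Sstar : ℕ → Ω → ℝ)
    (hS : ∀ n ω, S n ω = ∑ i ∈ Finset.Icc 1 d, N n i ω)
    (hSstar : ∀ n ω, Sstar n ω = ∑ i ∈ Finset.Icc 1 d0, N n i ω)
    (Z : ℕ → ℕ → Ω → ℝ)
    (hZ : ∀ n j ω, Z n j ω = N n j ω / S n ω)
    (hZcond : ∀ n, ∀ j ∈ Finset.Icc 1 d, Z n j =ᵐ[μ] μ[X (n + 1) j | G n])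
    (lam0 m : ℝ)
    (hlam0_eq : d0 = d → lam0 = 0)
    (hlam0_lt : ∀ h : d0 < d, lam0 = (Finset.Ioc d0 d).sup'
        (Finset.nonempty_Ioc.mpr h)
        (fun j => Filter.limsup (fun n : ℕ => ∫ ω, A n j ω ∂μ) Filter.atTop))
    (hEA : ∀ n, 1 ≤ n → ∀ j ∈ Finset.Icc 1 d0, ∫ ω, A n j ω ∂μ = ∫ ω, A n 1 ω ∂μ)
    (hm : Filter.Tendsto (fun n : ℕ => ∫ ω, A n 1 ω ∂μ) Filter.atTop (nhds m))
    (hmgt : lam0 < m)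
    (q : ℕ → ℝ)
    (hq : ∀ j ∈ Finset.Icc 1 d0,
        Filter.Tendsto (fun n : ℕ => ∫ ω, (A n j ω) ^ 2 ∂μ) Filter.atTop (nhds (q j))) :
    ∀ i ∈ Finset.Icc 1 d0,
      ∀ᵐ ω ∂μ, Summable (fun n : ℕ => 1 / (S n ω * N n i ω)) :=
  stmt15_general d d0 hd0d X A hXmeas hAmeas β hX01 hAbd a ha G hG hindep N hN S hS Z hZ hZcond lam0
    m hlam0_eq hlam0_lt hEA hm hmgt
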